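/- Let m ≥ 3 be an odd integer. Then F₁(m) is a subgroup of G₁(m) of index 2; every element g of F₁(m) commutes with J, i.e. g ∘ J = J ∘ g; and every element g of G₁(m) not belonging to F₁(m) anticommutes with J, i.e. g(J·x) = -J(g·x) for all x ∈ ℍ. -/

import Mathlib

noncomputable section

open Quaternion Real

/-- The quaternion `i`. -/
def qi : Quaternion ℝ := ⟨0, 1, 0, 0⟩
/-- The quaternion `j`. -/
def qj : Quaternion ℝ := ⟨0, 0, 1, 0⟩
/-- The quaternion `k`. -/
def qk : Quaternion ℝ := ⟨0, 0, 0, 1⟩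
/-- The unit quaternion `e_s = cos(π/s) + sin(π/s) i`. -/
def es (s : ℕ) : Quaternion ℝ := ⟨Real.cos (Real.pi / s), Real.sin (Real.pi / s), 0, 0⟩

lemma norm_eq_one_of_normSq {a : Quaternion ℝ} (h : Quaternion.normSq a = 1) : ‖a‖ = 1 := by
  have h2 : ‖a‖ * ‖a‖ = 1 := by rw [← Quaternion.normSq_eq_norm_mul_self, h]
  rcases mul_self_eq_one_iff.1 h2 with h' | h'
  · exact h'
  · nlinarith [norm_nonneg a]

lemma norm_qi : ‖qi‖ = 1 := norm_eq_one_of_normSq (by rw [Quaternion.normSq_def']; simp [qi])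
lemma norm_qj : ‖qj‖ = 1 := norm_eq_one_of_normSq (by rw [Quaternion.normSq_def']; simp [qj])
lemma norm_qk : ‖qk‖ = 1 := norm_eq_one_of_normSq (by rw [Quaternion.normSq_def']; simp [qk])
lemma norm_es (s : ℕ) : ‖es s‖ = 1 :=
  norm_eq_one_of_normSq (by
    rw [Quaternion.normSq_def']; simp only [es]
    simp [Real.sin_sq_add_cos_sq, Real.cos_sq_add_sin_sq])

lemma self_mul_star_of_norm_one {a : Quaternion ℝ} (h : ‖a‖ = 1) : a * star a = 1 := by
  rw [Quaternion.self_mul_star]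
  have h1 : Quaternion.normSq a = 1 := by rw [Quaternion.normSq_eq_norm_mul_self, h, mul_one]
  rw [h1]; norm_num

lemma star_mul_self_of_norm_one {a : Quaternion ℝ} (h : ‖a‖ = 1) : star a * a = 1 := by
  rw [Quaternion.star_mul_self]
  have h1 : Quaternion.normSq a = 1 := by rw [Quaternion.normSq_eq_norm_mul_self, h, mul_one]
  rw [h1]; norm_num

/-- The rotation `[l,r] : x ↦ l̄ x r` of `ℝ⁴ ≅ ℍ`, for unit quaternions `l, r`. -/
def qrot (l r : Quaternion ℝ) (hl : ‖l‖ = 1) (hr : ‖r‖ = 1) :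
    Quaternion ℝ ≃ₗ[ℝ] Quaternion ℝ where
  toFun x := star l * x * r
  invFun x := l * x * star r
  map_add' x y := by noncomm_ring
  map_smul' c x := by simp [mul_smul_comm, smul_mul_assoc]
  left_inv x := by
    have h : l * (star l * x * r) * star r = (l * star l) * x * (r * star r) := by noncomm_ring
    simp [h, self_mul_star_of_norm_one hl, self_mul_star_of_norm_one hr]
  right_inv x := by
    have h : star l * (l * x * star r) * r = (star l * l) * x * (star r * r) := by noncomm_ring
    simp [h, star_mul_self_of_norm_one hl, star_mul_self_of_norm_one hr]

/-- The group `G₁(m)`. -/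
def G1 (m : ℕ) : Subgroup (Quaternion ℝ ≃ₗ[ℝ] Quaternion ℝ) :=
  Subgroup.closure
    {qrot (es m) 1 (norm_es m) norm_one,
     qrot 1 qi norm_one norm_qi,
     qrot 1 qj norm_one norm_qj,
     qrot qj (es 4) norm_qj (norm_es 4)}

/-- The group `G₂(m)`. -/
def G2 (m : ℕ) : Subgroup (Quaternion ℝ ≃ₗ[ℝ] Quaternion ℝ) :=
  Subgroup.closure
    {qrot (es m) 1 (norm_es m) norm_one,
     qrot 1 qi norm_one norm_qi,
     qrot (es (2 * m)) qj (norm_es (2 * m)) norm_qj,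
     qrot qj (es 4) norm_qj (norm_es 4)}

/-- The group `G₃(m)`. -/
def G3 (m : ℕ) : Subgroup (Quaternion ℝ ≃ₗ[ℝ] Quaternion ℝ) :=
  Subgroup.closure
    {qrot (es m) 1 (norm_es m) norm_one,
     qrot 1 qi norm_one norm_qi,
     qrot qj 1 norm_qj norm_one,
     qrot 1 qj norm_one norm_qj}

/-- The group `F₁(m)`. -/
def F1 (m : ℕ) : Subgroup (Quaternion ℝ ≃ₗ[ℝ] Quaternion ℝ) :=
  Subgroup.closure
    {qrot (es m) qi (norm_es m) norm_qi,
     qrot 1 qj norm_one norm_qj}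

/-- The automorphism `J = [i,1] : x ↦ ī x`. -/
def Jmap : Quaternion ℝ ≃ₗ[ℝ] Quaternion ℝ := qrot qi 1 norm_qi norm_one

/-!
`J = [i,1]` commutes with `[l,r]` when `l` commutes with `i`, and anticommutes with it when `l`
anticommutes with `i`. Both generators `[e_m,i]`, `[1,j]` of `F₁(m)` are of the first kind, while
`τ = [j,e₄]` is of the second, so `τ ∉ F₁(m)`. Conversely `G₁(m) = F₁(m) ∪ F₁(m)τ`: since `m` is odd,
`[e_m,i]^m = [1,±i]`, so `[1,i]` and `[e_m,1] = [e_m,i][1,i]⁻¹` lie in `F₁(m)`; moreover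
`τ² = [1,i]⁻¹ ∈ F₁(m)` and conjugation by `τ` preserves `F₁(m)`.
-/

section CosetDecomposition

variable {G : Type*} [Group G] {H : Subgroup G} {t : G}

theorem Subgroup.mul_inv_mem_or_mem_of_mem_closure (hconj : ∀ h ∈ H, t * h * t⁻¹ ∈ H)
    (ht : t * t ∈ H) {S : Set G} (hS : ∀ s ∈ S, s * t⁻¹ ∈ H ∨ s ∈ H) {g : G}
    (hg : g ∈ Subgroup.closure S) : g * t⁻¹ ∈ H ∨ g ∈ H := by
  induction hg using Subgroup.closure_induction with
  | mem s hs => exact hS s hs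
  | one => exact Or.inr H.one_mem
  | mul a b _ _ ha hb =>
    rcases ha with ha | ha <;> rcases hb with hb | hb
    · refine Or.inr ?_
      have h : a * b = a * t⁻¹ * (t * (b * t⁻¹) * t⁻¹) * (t * t) := by group
      exact h ▸ mul_mem (mul_mem ha (hconj _ hb)) ht
    · refine Or.inl ?_
      have h : a * b * t⁻¹ = a * t⁻¹ * (t * b * t⁻¹) := by group
      exact h ▸ mul_mem ha (hconj _ hb)
    · exact Or.inl (mul_assoc a b t⁻¹ ▸ mul_mem ha hb)
    · exact Or.inr (mul_mem ha hb)
  | inv a _ ha =>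
    rcases ha with ha | ha
    · refine Or.inl ?_
      have h : a⁻¹ * t⁻¹ = (t * t)⁻¹ * (t * (a * t⁻¹)⁻¹ * t⁻¹) := by group
      exact h ▸ mul_mem (inv_mem ht) (hconj _ (inv_mem ha))
    · exact Or.inr (inv_mem ha)

end CosetDecomposition

section Quaternion

@[simp] lemma qi_re : qi.re = 0 := rfl
@[simp] lemma qi_imI : qi.imI = 1 := rfl
@[simp] lemma qi_imJ : qi.imJ = 0 := rfl
@[simp] lemma qi_imK : qi.imK = 0 := rfl
@[simp] lemma qj_re : qj.re = 0 := rfl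
@[simp] lemma qj_imI : qj.imI = 0 := rfl
@[simp] lemma qj_imJ : qj.imJ = 1 := rfl
@[simp] lemma qj_imK : qj.imK = 0 := rfl
@[simp] lemma es_re (s : ℕ) : (es s).re = cos (π / s) := rfl
@[simp] lemma es_imI (s : ℕ) : (es s).imI = sin (π / s) := rfl
@[simp] lemma es_imJ (s : ℕ) : (es s).imJ = 0 := rfl
@[simp] lemma es_imK (s : ℕ) : (es s).imK = 0 := rfl

lemma qi_mul_qi : qi * qi = -1 := by ext <;> simp
lemma qj_mul_qj : qj * qj = -1 := by ext <;> simp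
lemma qj_mul_qi : qj * qi = -(qi * qj) := by ext <;> simp
lemma star_qi : star qi = -qi := by ext <;> simp
lemma es_mul_qi (s : ℕ) : es s * qi = qi * es s := by ext <;> simp [mul_comm]
lemma qj_mul_es (s : ℕ) : qj * es s = star (es s) * qj := by ext <;> simp

lemma es_eq_coeComplex (s : ℕ) : es s = ((Complex.exp (↑(π / s) * Complex.I) : ℂ) : ℍ) := by
  ext <;> simp only [es_re, es_imI, es_imJ, es_imK, re_coeComplex, imI_coeComplex,
    imJ_coeComplex, imK_coeComplex, Complex.exp_ofReal_mul_I_re, Complex.exp_ofReal_mul_I_im]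

lemma es_pow_self {s : ℕ} (hs : s ≠ 0) : es s ^ s = -1 := by
  rw [es_eq_coeComplex, ← coe_ofComplex, ← map_pow, ← Complex.exp_nat_mul, ← mul_assoc]
  push_cast
  rw [mul_div_cancel₀ _ (Nat.cast_ne_zero.mpr hs), Complex.exp_pi_mul_I, map_neg, map_one]

lemma es_four_mul_self : es 4 * es 4 = qi := by
  rw [es_eq_coeComplex, ← coe_ofComplex, ← map_mul, ← Complex.exp_add]
  push_cast
  rw [show (π / 4 * Complex.I + π / 4 * Complex.I) = π / 2 * Complex.I by ring,
    Complex.exp_pi_div_two_mul_I]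
  ext <;> simp

lemma qi_pow_of_odd {m : ℕ} (hm : Odd m) : qi ^ m = qi ∨ qi ^ m = -qi := by
  obtain ⟨k, rfl⟩ := hm
  rw [pow_succ, pow_mul, sq, qi_mul_qi]
  rcases neg_one_pow_eq_or (Quaternion ℝ) k with h | h <;> simp [h]

end Quaternion

section Rotations

variable {l r l' r' : ℍ} (hl : ‖l‖ = 1) (hr : ‖r‖ = 1) (hl' : ‖l'‖ = 1) (hr' : ‖r'‖ = 1)

lemma qrot_apply (x : ℍ) : qrot l r hl hr x = star l * x * r := rfl

lemma qrot_congr (h₁ : l = l') (h₂ : r = r') : qrot l r hl hr = qrot l' r' hl' hr' := by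
  subst h₁ h₂; rfl

lemma qrot_neg_neg : qrot (-l) (-r) (by rwa [norm_neg]) (by rwa [norm_neg]) = qrot l r hl hr :=
  LinearEquiv.ext fun x => by simp only [qrot_apply, star_neg, neg_mul, mul_neg, neg_neg]

lemma qrot_mul :
    qrot l r hl hr * qrot l' r' hl' hr' =
      qrot (l' * l) (r' * r) (by rw [norm_mul, hl, hl', one_mul])
        (by rw [norm_mul, hr, hr', one_mul]) :=
  LinearEquiv.ext fun x => by simp only [LinearEquiv.mul_apply, qrot_apply, star_mul, mul_assoc]

lemma qrot_inv :
    (qrot l r hl hr)⁻¹ = qrot (star l) (star r) (by rwa [norm_star]) (by rwa [norm_star]) :=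
  LinearEquiv.ext fun x => by rw [qrot_apply, star_star]; rfl

lemma qrot_pow (n : ℕ) :
    qrot l r hl hr ^ n = qrot (l ^ n) (r ^ n) (by rw [norm_pow, hl, one_pow])
      (by rw [norm_pow, hr, one_pow]) := by
  induction n with
  | zero => exact LinearEquiv.ext fun x => by simp [qrot_apply]
  | succ n ih =>
    rw [pow_succ, ih, qrot_mul]
    exact qrot_congr _ _ _ _ (pow_succ' l n).symm (pow_succ' r n).symm

lemma qrot_mul_Jmap_of_commute (h : l * qi = qi * l) :
    qrot l r hl hr * Jmap = Jmap * qrot l r hl hr := by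
  rw [Jmap, qrot_mul, qrot_mul]
  exact qrot_congr _ _ _ _ h.symm (by rw [one_mul, mul_one])

lemma qrot_Jmap_of_anticommute (h : l * qi = -(qi * l)) (x : ℍ) :
    qrot l r hl hr (Jmap x) = -Jmap (qrot l r hl hr x) := by
  have h' : star l * star qi = -(star qi * star l) := by
    rw [← star_mul, ← star_mul, h, star_neg, neg_neg]
  simp only [Jmap, qrot_apply, mul_one]
  rw [← mul_assoc (star l), h']
  noncomm_ring

end Rotations

section Generators

def rotE (m : ℕ) : ℍ ≃ₗ[ℝ] ℍ := qrot (es m) 1 (norm_es m) norm_one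
def rotI : ℍ ≃ₗ[ℝ] ℍ := qrot 1 qi norm_one norm_qi
def rotJ : ℍ ≃ₗ[ℝ] ℍ := qrot 1 qj norm_one norm_qj
def rotT : ℍ ≃ₗ[ℝ] ℍ := qrot qj (es 4) norm_qj (norm_es 4)
def rotEI (m : ℕ) : ℍ ≃ₗ[ℝ] ℍ := qrot (es m) qi (norm_es m) norm_qi

lemma G1_eq_closure (m : ℕ) : G1 m = Subgroup.closure {rotE m, rotI, rotJ, rotT} := rfl
lemma F1_eq_closure (m : ℕ) : F1 m = Subgroup.closure {rotEI m, rotJ} := rfl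

lemma rotE_mul_rotI (m : ℕ) : rotE m * rotI = rotEI m := by
  rw [rotE, rotI, qrot_mul]
  exact qrot_congr _ _ _ _ (one_mul _) (mul_one _)

lemma rotEI_pow_self {m : ℕ} (hm : Odd m) : rotEI m ^ m = rotI ∨ rotEI m ^ m = rotI⁻¹ := by
  have he : es m ^ m = -1 := es_pow_self (by rintro rfl; exact Nat.not_odd_zero hm)
  rw [rotEI, rotI, qrot_pow, qrot_inv]
  rcases qi_pow_of_odd hm with h | h
  · refine Or.inr ((qrot_congr _ _ _ _ ?_ ?_).trans (qrot_neg_neg _ _))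
    · rw [he, star_one]
    · rw [h, star_qi, neg_neg]
  · exact Or.inl ((qrot_congr _ _ _ _ he h).trans (qrot_neg_neg _ _))

lemma rotT_mul_self : rotT * rotT = rotI⁻¹ := by
  rw [rotT, rotI, qrot_mul, qrot_inv, ← qrot_neg_neg]
  exact qrot_congr _ _ _ _ (by rw [qj_mul_qj, star_one, neg_neg]) (by rw [es_four_mul_self, star_qi])

lemma rotT_mul_rotEI_mul_inv (m : ℕ) : rotT * rotEI m * rotT⁻¹ = (rotEI m)⁻¹ * rotJ * rotJ := by
  simp only [rotT, rotEI, rotJ, qrot_inv, qrot_mul]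
  refine qrot_congr _ _ _ _ (by ext <;> simp) ?_
  rw [← es_mul_qi, ← mul_assoc, star_mul_self_of_norm_one (norm_es 4), one_mul, ← mul_assoc,
    qj_mul_qj, star_qi, neg_one_mul, neg_neg]

lemma rotT_mul_rotJ_mul_inv : rotT * rotJ * rotT⁻¹ = rotI⁻¹ * rotJ⁻¹ := by
  simp only [rotT, rotI, rotJ, qrot_inv, qrot_mul]
  refine qrot_congr _ _ _ _ (by ext <;> simp) ?_
  rw [qj_mul_es, ← mul_assoc, ← star_mul, es_four_mul_self]
  ext <;> simp

end Generators

section Membership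

lemma rotEI_mem_F1 (m : ℕ) : rotEI m ∈ F1 m := by
  rw [F1_eq_closure]; exact Subgroup.subset_closure (by simp)

lemma rotJ_mem_F1 (m : ℕ) : rotJ ∈ F1 m := by
  rw [F1_eq_closure]; exact Subgroup.subset_closure (by simp)

lemma rotI_mem_F1 {m : ℕ} (hm : Odd m) : rotI ∈ F1 m := by
  have h : rotEI m ^ m ∈ F1 m := pow_mem (rotEI_mem_F1 m) m
  rcases rotEI_pow_self hm with h' | h'
  · exact h' ▸ h
  · exact inv_mem_iff.mp (h' ▸ h)

lemma rotE_mem_F1 {m : ℕ} (hm : Odd m) : rotE m ∈ F1 m := by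
  rw [← mul_inv_cancel_right (rotE m) rotI, rotE_mul_rotI]
  exact mul_mem (rotEI_mem_F1 m) (inv_mem (rotI_mem_F1 hm))

lemma F1_le_G1 (m : ℕ) : F1 m ≤ G1 m := by
  rw [F1_eq_closure, G1_eq_closure, Subgroup.closure_le]
  rintro g (rfl | rfl)
  · rw [← rotE_mul_rotI]
    exact mul_mem (Subgroup.subset_closure (by simp)) (Subgroup.subset_closure (by simp))
  · exact Subgroup.subset_closure (by simp)

lemma rotT_mem_G1 (m : ℕ) : rotT ∈ G1 m := by
  rw [G1_eq_closure]; exact Subgroup.subset_closure (by simp)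

lemma F1_le_centralizer_Jmap (m : ℕ) : F1 m ≤ Subgroup.centralizer {Jmap} := by
  rw [F1_eq_closure, Subgroup.closure_le]
  rintro g (rfl | rfl) <;> refine Subgroup.mem_centralizer_singleton_iff.mpr ?_
  · exact qrot_mul_Jmap_of_commute _ _ (es_mul_qi m)
  · exact qrot_mul_Jmap_of_commute _ _ (by rw [one_mul, mul_one])

lemma rotT_Jmap (x : ℍ) : rotT (Jmap x) = -Jmap (rotT x) :=
  qrot_Jmap_of_anticommute _ _ qj_mul_qi x

lemma rotT_notMem_F1 (m : ℕ) : rotT ∉ F1 m := by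
  intro h
  have hcomm : rotT (Jmap 1) = Jmap (rotT 1) :=
    DFunLike.congr_fun (Subgroup.mem_centralizer_singleton_iff.mp (F1_le_centralizer_Jmap m h)) 1
  have : IsAddTorsionFree ℍ := .of_isTorsionFree ℝ ℍ
  rw [rotT_Jmap, eq_comm, self_eq_neg, LinearEquiv.map_eq_zero_iff,
    LinearEquiv.map_eq_zero_iff] at hcomm
  exact one_ne_zero hcomm

lemma rotT_mul_mul_inv_mem_F1 {m : ℕ} (hm : Odd m) {f : ℍ ≃ₗ[ℝ] ℍ} (hf : f ∈ F1 m) :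
    rotT * f * rotT⁻¹ ∈ F1 m := by
  suffices F1 m ≤ (F1 m).comap (MulAut.conj rotT).toMonoidHom from this hf
  rw [F1_eq_closure, Subgroup.closure_le]
  rintro g (rfl | rfl) <;> simp only [SetLike.mem_coe, Subgroup.mem_comap, MulEquiv.coe_toMonoidHom,
    MulAut.conj_apply] <;> rw [← F1_eq_closure]
  · rw [rotT_mul_rotEI_mul_inv]
    exact mul_mem (mul_mem (inv_mem (rotEI_mem_F1 m)) (rotJ_mem_F1 m)) (rotJ_mem_F1 m)
  · rw [rotT_mul_rotJ_mul_inv]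
    exact mul_mem (inv_mem (rotI_mem_F1 hm)) (inv_mem (rotJ_mem_F1 m))

lemma mul_inv_mem_F1_or_mem_of_mem_G1 {m : ℕ} (hm : Odd m) {g : ℍ ≃ₗ[ℝ] ℍ} (hg : g ∈ G1 m) :
    g * rotT⁻¹ ∈ F1 m ∨ g ∈ F1 m := by
  refine Subgroup.mul_inv_mem_or_mem_of_mem_closure (fun f hf => rotT_mul_mul_inv_mem_F1 hm hf)
    (rotT_mul_self ▸ inv_mem (rotI_mem_F1 hm)) ?_ hg
  rintro s (rfl | rfl | rfl | rfl)
  · exact Or.inr (rotE_mem_F1 hm)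
  · exact Or.inr (rotI_mem_F1 hm)
  · exact Or.inr (rotJ_mem_F1 m)
  · exact Or.inl ((mul_inv_cancel rotT).symm ▸ one_mem _)

end Membership

theorem F1_index_two_and_J_general (m : ℕ) (hodd : Odd m) :
    F1 m ≤ G1 m ∧ (F1 m).relIndex (G1 m) = 2 ∧
    (∀ g ∈ F1 m, g * Jmap = Jmap * g) ∧
    (∀ g ∈ G1 m, g ∉ F1 m → ∀ x : Quaternion ℝ, g (Jmap x) = - Jmap (g x)) := by
  have hcomm (f) (hf : f ∈ F1 m) : f * Jmap = Jmap * f :=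
    Subgroup.mem_centralizer_singleton_iff.mp (F1_le_centralizer_Jmap m hf)
  refine ⟨F1_le_G1 m, ?_, hcomm, ?_⟩
  · refine Subgroup.relIndex_eq_two_iff_exists_notMem_and.mpr
      ⟨rotT⁻¹, inv_mem (rotT_mem_G1 m), inv_mem_iff.not.mpr (rotT_notMem_F1 m), ?_⟩
    exact fun g hg => mul_inv_mem_F1_or_mem_of_mem_G1 hodd hg
  · intro g hg hgF x
    obtain ⟨f, hf, rfl⟩ : ∃ f ∈ F1 m, g = f * rotT :=
      ⟨g * rotT⁻¹, (mul_inv_mem_F1_or_mem_of_mem_G1 hodd hg).resolve_right hgF, by group⟩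
    calc f (rotT (Jmap x)) = -f (Jmap (rotT x)) := by rw [rotT_Jmap, map_neg]
      _ = -Jmap (f (rotT x)) := by rw [← LinearEquiv.mul_apply, hcomm f hf]; rfl

/-- `F₁(m)` is an index-two subgroup of `G₁(m)`; its elements commute with `J`,
while the elements of `G₁(m) \ F₁(m)` anticommute with `J`. -/
theorem F1_index_two_and_J (m : ℕ) (hm : 3 ≤ m) (hodd : Odd m) :
    F1 m ≤ G1 m ∧ (F1 m).relIndex (G1 m) = 2 ∧
    (∀ g ∈ F1 m, g * Jmap = Jmap * g) ∧
    (∀ g ∈ G1 m, g ∉ F1 m → ∀ x : Quaternion ℝ, g (Jmap x) = - Jmap (g x)) :=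
  F1_index_two_and_J_general m hodd
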